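/- arXiv:1911.03767 — 2 statements merged into one kernel-verified Lean document; each statement's English description precedes it below -/
import Mathlib

section
/- Let X be a 2-based Banach space with polar parameterization p and constants c, C. Then for every t ∈ ℝ the one-sided derivatives satisfy c/C ≤ min{‖p'_−(t)‖, ‖p'_+(t)‖} ≤ max{‖p'_−(t)‖, ‖p'_+(t)‖} ≤ 2C²/c². -/
noncomputable section
open MeasureTheory Set Filter
open scoped ENNReal Topology

variable {X : Type*} [NormedAddCommGroup X] [NormedSpace ℝ X]

/-- `e^{it} = cos t • e₁ + sin t • e₂` for the basis `b 0, b 1`. -/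
def expV (b : Module.Basis (Fin 2) ℝ X) (t : ℝ) : X :=
  Real.cos t • b 0 + Real.sin t • b 1

/-- The polar parameterization `p(t) = e^{it}/‖e^{it}‖` of the unit sphere. -/
def polarParam (b : Module.Basis (Fin 2) ℝ X) (t : ℝ) : X :=
  ‖expV b t‖⁻¹ • expV b t

/-- The Euclidean norm `|x| = √(e₁*(x)² + e₂*(x)²)` associated to the basis. -/
def euclNorm (b : Module.Basis (Fin 2) ℝ X) (x : X) : ℝ :=
  Real.sqrt ((b.coord 0 x)^2 + (b.coord 1 x)^2)

/-- `c = min{‖x‖ : |x| = 1}`. -/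
def cConst (b : Module.Basis (Fin 2) ℝ X) : ℝ :=
  sInf (norm '' {x : X | euclNorm b x = 1})

/-- `C = max{‖x‖ : |x| = 1}`. -/
def CConst (b : Module.Basis (Fin 2) ℝ X) : ℝ :=
  sSup (norm '' {x : X | euclNorm b x = 1})

/-- The right derivative of a function `f : ℝ → X`. -/
def rightDeriv (f : ℝ → X) (t : ℝ) : X := derivWithin f (Ici t) t

/-- The left derivative of a function `f : ℝ → X`. -/
def leftDeriv (f : ℝ → X) (t : ℝ) : X := derivWithin f (Iic t) t

/-- The arc-length function `s(t) = ∫₀^t ‖p'₊(u)‖ du`. -/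
def arcLen (b : Module.Basis (Fin 2) ℝ X) (t : ℝ) : ℝ :=
  ∫ u in (0:ℝ)..t, ‖rightDeriv (polarParam b) u‖

/-- The half-length `L = s(π)` of the unit sphere. -/
def halfLen (b : Module.Basis (Fin 2) ℝ X) : ℝ := arcLen b Real.pi

/-- The inverse `t = s⁻¹` of the arc-length function. -/
def arcInv (b : Module.Basis (Fin 2) ℝ X) : ℝ → ℝ := Function.invFun (arcLen b)

/-- The natural parameterization `r = p ∘ t` of the unit sphere. -/
def natParam (b : Module.Basis (Fin 2) ℝ X) : ℝ → X := polarParam b ∘ arcInv b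

/-- Local absolute continuity of `f` with a.e. derivative `f'`, in the sense that `f` is
differentiable almost everywhere, `f'` is locally integrable, and `f` is recovered from `f'`
by integration. -/
def LocAC {E : Type*} [NormedAddCommGroup E] [NormedSpace ℝ E] [CompleteSpace E]
    (f f' : ℝ → E) : Prop :=
  (∀ᵐ t : ℝ, HasDerivAt f (f' t) t) ∧ LocallyIntegrable f' volume ∧
    ∀ a b : ℝ, a ≤ b → f b - f a = ∫ t in a..b, f' t

/-- `s` is a Lebesgue point of `g`. -/
def LebesguePoint {E : Type*} [NormedAddCommGroup E] (g : ℝ → E) (s : ℝ) : Prop :=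
  Tendsto (fun ε : ℝ => (1/ε) * ∫ t in (0:ℝ)..ε, ‖g (s + t) - g s‖) (𝓝[≠] (0:ℝ)) (𝓝 0)

/-!
Write `p = ‖e‖⁻¹ • e` with `e t = e^{it}`, whose derivative is `e (t + π / 2)`. To first order
`‖e u‖` agrees with the norm of the tangent line `u ↦ e t + (u - t) • e (t + π / 2)`, a convex
function of `u`, so it has one-sided derivatives `d`, and `|d| ≤ ‖e (t + π / 2)‖ ≤ C` because the
norm is `1`-Lipschitz. Hence `p'_±(t) = ‖e t‖⁻¹ • e (t + π / 2) - (d / ‖e t‖²) • e t`. As `e t` and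
`e (t + π / 2)` are orthonormal for the Euclidean norm, `|p'_±(t)| ≥ ‖e t‖⁻¹ ≥ 1 / C`, which gives
the lower bound `c / C`; the triangle inequality gives `‖p'_±(t)‖ ≤ C / c + C² / c² ≤ 2 C² / c²`.
-/

open Asymptotics Real

lemma convexOn_norm_add_sub_smul (x v : X) (t : ℝ) :
    ConvexOn ℝ univ (fun u : ℝ => ‖x + (u - t) • v‖) := by
  have h := convexOn_univ_norm.comp_affineMap (AffineMap.lineMap (x - t • v) (x - t • v + v))
  rw [preimage_univ] at h
  refine h.congr fun u _ => ?_
  simp only [Function.comp_apply, AffineMap.lineMap_apply_module]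
  congr 1
  module

lemma HasDerivAt.hasDerivWithinAt_norm_of_tangent {γ : ℝ → X} {v : X} {t d : ℝ} {s : Set ℝ}
    (hγ : HasDerivAt γ v t) (hd : HasDerivWithinAt (fun u => ‖γ t + (u - t) • v‖) d s t) :
    HasDerivWithinAt (fun u => ‖γ u‖) d s t := by
  have hclose : (fun u => ‖γ u‖ - ‖γ t + (u - t) • v‖) =o[𝓝[s] t] fun u => u - t := by
    refine (isBigO_of_le _ fun u => ?_).trans_isLittleO (hγ.isLittleO.mono nhdsWithin_le_nhds)
    rw [Real.norm_eq_abs, sub_sub]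
    exact abs_norm_sub_norm_le _ _
  refine .of_isLittleO <| (hd.isLittleO.add hclose).congr_left fun u => ?_
  simp only [sub_self, zero_smul, add_zero]
  ring

lemma abs_le_of_hasDerivWithinAt {f : ℝ → ℝ} {d K t : ℝ} {s : Set ℝ}
    (hd : HasDerivWithinAt f d s t) (hs : (𝓝[s \ {t}] t).NeBot)
    (hf : ∀ u, |f u - f t| ≤ K * |u - t|) : |d| ≤ K := by
  refine le_of_tendsto (hasDerivWithinAt_iff_tendsto_slope.1 hd).abs ?_
  filter_upwards [self_mem_nhdsWithin] with u hu
  rw [slope_def_field, abs_div, div_le_iff₀ (abs_pos.2 (sub_ne_zero.2 hu.2))]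
  exact hf u

lemma HasDerivAt.exists_hasDerivWithinAt_norm {γ : ℝ → X} {v : X} {t : ℝ} {s : Set ℝ}
    (hγ : HasDerivAt γ v t) (hs : s = Iic t ∨ s = Ici t) :
    ∃ d, |d| ≤ ‖v‖ ∧ HasDerivWithinAt (fun u => ‖γ u‖) d s t := by
  have hconv := convexOn_norm_add_sub_smul (γ t) v t
  have hmem : t ∈ interior univ := by simp
  obtain ⟨d, hd⟩ : ∃ d, HasDerivWithinAt (fun u => ‖γ t + (u - t) • v‖) d s t := by
    rcases hs with rfl | rfl
    · exact ⟨_, (hconv.hasDerivWithinAt_leftDeriv_of_mem_interior hmem).Iic_of_Iio⟩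
    · exact ⟨_, (hconv.hasDerivWithinAt_rightDeriv_of_mem_interior hmem).Ici_of_Ioi⟩
  have hne : (𝓝[s \ {t}] t).NeBot := by
    rcases hs with rfl | rfl
    · rw [Iic_sdiff_right]; exact nhdsLT_neBot t
    · rw [Ici_sdiff_left]; exact nhdsGT_neBot t
  refine ⟨d, abs_le_of_hasDerivWithinAt hd hne fun u => ?_, hγ.hasDerivWithinAt_norm_of_tangent hd⟩
  have h := abs_norm_sub_norm_le (γ t + (u - t) • v) (γ t)
  rw [add_sub_cancel_left, norm_smul, Real.norm_eq_abs, mul_comm] at h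
  simpa using h

section Basis

variable (b : Module.Basis (Fin 2) ℝ X)

def euclEquiv : X ≃L[ℝ] EuclideanSpace ℝ (Fin 2) :=
  have : FiniteDimensional ℝ X := Module.Finite.of_basis b
  b.equivFun.toContinuousLinearEquiv.trans (EuclideanSpace.equiv (Fin 2) ℝ).symm

lemma euclNorm_eq_norm_euclEquiv (x : X) : euclNorm b x = ‖euclEquiv b x‖ := by
  simp [euclNorm, euclEquiv, EuclideanSpace.norm_eq, Fin.sum_univ_two, Module.Basis.coord_apply]

lemma isCompact_norm_image_setOf_euclNorm_eq_one :
    IsCompact (norm '' {x : X | euclNorm b x = 1}) := by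
  have hS : {x : X | euclNorm b x = 1} = euclEquiv b ⁻¹' Metric.sphere 0 1 := by
    ext x
    simp [euclNorm_eq_norm_euclEquiv]
  rw [hS, ← ContinuousLinearEquiv.image_symm_eq_preimage, image_image]
  exact (isCompact_sphere 0 1).image (by fun_prop)

lemma cConst_le_norm {x : X} (hx : euclNorm b x = 1) : cConst b ≤ ‖x‖ :=
  csInf_le (isCompact_norm_image_setOf_euclNorm_eq_one b).bddBelow (mem_image_of_mem _ hx)

lemma norm_le_CConst {x : X} (hx : euclNorm b x = 1) : ‖x‖ ≤ CConst b :=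
  le_csSup (isCompact_norm_image_setOf_euclNorm_eq_one b).bddAbove (mem_image_of_mem _ hx)

lemma cConst_pos : 0 < cConst b := by
  have hb : euclNorm b (b 0) = 1 := by simp [euclNorm, Module.Basis.coord_apply]
  obtain ⟨x, hx, hcx⟩ :=
    (isCompact_norm_image_setOf_euclNorm_eq_one b).sInf_mem ⟨_, mem_image_of_mem _ hb⟩
  rw [cConst, ← hcx, norm_pos_iff]
  rintro rfl
  simp [euclNorm] at hx

lemma cConst_mul_euclNorm_le_norm (x : X) : cConst b * euclNorm b x ≤ ‖x‖ := by
  rw [euclNorm_eq_norm_euclEquiv]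
  rcases eq_or_ne ‖euclEquiv b x‖ 0 with h | h
  · simp [h]
  have hunit : euclNorm b (‖euclEquiv b x‖⁻¹ • x) = 1 := by
    rw [euclNorm_eq_norm_euclEquiv, map_smul, norm_smul, norm_inv, norm_norm, inv_mul_cancel₀ h]
  have := cConst_le_norm b hunit
  rwa [norm_smul, norm_inv, norm_norm, le_inv_mul_iff₀ (by positivity), mul_comm] at this

lemma euclNorm_smul_expV_add_smul_expV (α β t : ℝ) :
    euclNorm b (α • expV b (t + π / 2) + β • expV b t) = √(α ^ 2 + β ^ 2) := by
  simp only [euclNorm, expV, map_add, map_smul, cos_add_pi_div_two, sin_add_pi_div_two,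
    Module.Basis.coord_apply, Module.Basis.repr_self, Finsupp.single_eq_same,
    Finsupp.single_eq_of_ne zero_ne_one, Finsupp.single_eq_of_ne one_ne_zero, smul_eq_mul]
  congr 1
  linear_combination (α ^ 2 + β ^ 2) * Real.sin_sq_add_cos_sq t

lemma euclNorm_expV (t : ℝ) : euclNorm b (expV b t) = 1 := by
  simpa using euclNorm_smul_expV_add_smul_expV b 0 1 t

lemma cConst_le_CConst : cConst b ≤ CConst b :=
  (cConst_le_norm b (euclNorm_expV b 0)).trans (norm_le_CConst b (euclNorm_expV b 0))

lemma hasDerivAt_expV (t : ℝ) : HasDerivAt (expV b) (expV b (t + π / 2)) t := by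
  have h := ((hasDerivAt_cos t).smul_const (b 0)).fun_add ((hasDerivAt_sin t).smul_const (b 1))
  rw [expV, cos_add_pi_div_two, sin_add_pi_div_two]
  exact h

lemma cConst_le_norm_expV (t : ℝ) : cConst b ≤ ‖expV b t‖ :=
  cConst_le_norm b (euclNorm_expV b t)

lemma norm_expV_le_CConst (t : ℝ) : ‖expV b t‖ ≤ CConst b :=
  norm_le_CConst b (euclNorm_expV b t)

lemma hasDerivWithinAt_polarParam {s : Set ℝ} {t d : ℝ}
    (hd : HasDerivWithinAt (fun u => ‖expV b u‖) d s t) :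
    HasDerivWithinAt (polarParam b)
      (‖expV b t‖⁻¹ • expV b (t + π / 2) + (-d / ‖expV b t‖ ^ 2) • expV b t) s t :=
  (hd.inv ((cConst_pos b).trans_le (cConst_le_norm_expV b t)).ne').smul
    (hasDerivAt_expV b t).hasDerivWithinAt

lemma div_le_norm_smul_expV_add_smul_expV (t β : ℝ) :
    cConst b / CConst b ≤ ‖‖expV b t‖⁻¹ • expV b (t + π / 2) + β • expV b t‖ := by
  have hc := cConst_pos b
  have hG : 0 < ‖expV b t‖ := hc.trans_le (cConst_le_norm_expV b t)
  calc cConst b / CConst b ≤ cConst b * ‖expV b t‖⁻¹ := by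
        rw [div_eq_mul_inv]
        gcongr
        exact norm_expV_le_CConst b t
    _ ≤ cConst b * √(‖expV b t‖⁻¹ ^ 2 + β ^ 2) := by
        gcongr
        exact Real.le_sqrt_of_sq_le (le_add_of_nonneg_right (sq_nonneg β))
    _ ≤ _ := by
        rw [← euclNorm_smul_expV_add_smul_expV b]
        exact cConst_mul_euclNorm_le_norm b _

lemma norm_smul_expV_add_smul_expV_le {t d : ℝ} (hd : |d| ≤ CConst b) :
    ‖‖expV b t‖⁻¹ • expV b (t + π / 2) + (-d / ‖expV b t‖ ^ 2) • expV b t‖ ≤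
      2 * CConst b ^ 2 / cConst b ^ 2 := by
  have hc := cConst_pos b
  have hcG := cConst_le_norm_expV b t
  have hcC := cConst_le_CConst b
  calc _ ≤ ‖expV b t‖⁻¹ * ‖expV b (t + π / 2)‖ + |d| / ‖expV b t‖ ^ 2 * ‖expV b t‖ := by
        refine (norm_add_le _ _).trans_eq ?_
        simp only [norm_smul, norm_inv, norm_div, norm_neg, norm_pow, Real.norm_eq_abs, abs_norm]
    _ = ‖expV b t‖⁻¹ * (‖expV b (t + π / 2)‖ + |d|) := by
        field_simp
    _ ≤ (cConst b)⁻¹ * (CConst b + CConst b) := by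
        gcongr
        exact norm_expV_le_CConst b _
    _ ≤ 2 * CConst b ^ 2 / cConst b ^ 2 := by
        rw [inv_mul_le_iff₀ hc, mul_div_assoc', le_div_iff₀ (by positivity)]
        nlinarith [mul_nonneg (mul_nonneg hc.le (hc.trans_le hcC).le) (sub_nonneg.2 hcC)]

lemma polarParam_derivWithin_bounds {s : Set ℝ} {t : ℝ} (hs : s = Iic t ∨ s = Ici t) :
    cConst b / CConst b ≤ ‖derivWithin (polarParam b) s t‖ ∧
      ‖derivWithin (polarParam b) s t‖ ≤ 2 * CConst b ^ 2 / cConst b ^ 2 := by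
  obtain ⟨d, hdV, hd⟩ := (hasDerivAt_expV b t).exists_hasDerivWithinAt_norm hs
  have hs' : UniqueDiffWithinAt ℝ s t := by
    rcases hs with rfl | rfl
    exacts [uniqueDiffWithinAt_Iic t, uniqueDiffWithinAt_Ici t]
  rw [(hasDerivWithinAt_polarParam b hd).derivWithin hs']
  exact ⟨div_le_norm_smul_expV_add_smul_expV b t _,
    norm_smul_expV_add_smul_expV_le b (hdV.trans (norm_expV_le_CConst b _))⟩

end Basis

theorem polarParam_oneSided_deriv_norm_bounds_general
    (b : Module.Basis (Fin 2) ℝ X) (t : ℝ) :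
    cConst b / CConst b ≤ min ‖leftDeriv (polarParam b) t‖ ‖rightDeriv (polarParam b) t‖ ∧
    max ‖leftDeriv (polarParam b) t‖ ‖rightDeriv (polarParam b) t‖ ≤
      2 * (CConst b)^2 / (cConst b)^2 := by
  obtain ⟨hl₁, hl₂⟩ := polarParam_derivWithin_bounds b (s := Iic t) (.inl rfl)
  obtain ⟨hr₁, hr₂⟩ := polarParam_derivWithin_bounds b (s := Ici t) (.inr rfl)
  exact ⟨le_min hl₁ hr₁, max_le hl₂ hr₂⟩

/-- Bounds on the norms of the one-sided derivatives of the polar parameterization. -/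
theorem polarParam_oneSided_deriv_norm_bounds [CompleteSpace X]
    (b : Module.Basis (Fin 2) ℝ X) (t : ℝ) :
    cConst b / CConst b ≤ min ‖leftDeriv (polarParam b) t‖ ‖rightDeriv (polarParam b) t‖ ∧
    max ‖leftDeriv (polarParam b) t‖ ‖rightDeriv (polarParam b) t‖ ≤
      2 * (CConst b)^2 / (cConst b)^2 :=
  polarParam_oneSided_deriv_norm_bounds_general b t

end
end

section
/- Let X be a 2-based Banach space with natural parameterization r and half-length L, and let s ∈ ℝ be a point at which r is twice differentiable both at s and at s + L. If ρ₁, τ₁, ρ₂, τ₂ are the real numbers with r''(s) = −ρ₁·r(s) + τ₁·r'(s) and r''(s+L) = −ρ₂·r(s+L) + τ₂·r'(s+L), then ρ₂ = ρ₁ and τ₂ = τ₁. -/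
/-!
Write `σ` for the point `s` of the statement. Since the norm is even, `p (t + π) = -p t`; hence
the arc-length integrand `‖p'₊‖` is `π`-periodic, `s (t + π) = s t + L`, and `r (σ + L) = -r σ`.
Differentiating, `r'` and `r''` are `L`-antiperiodic as well, so the two decompositions of `r''`
combine to `(ρ₂ - ρ₁) • r σ + (τ₁ - τ₂) • r' σ = 0`.

It remains that `r σ` and `r' σ` are linearly independent. In coordinates,
`det (r σ, r x) = sin (t x - t σ) / (‖e^{i t σ}‖ ‖e^{i t x}‖)`, and since `s` is `K`-Lipschitz,
`t x - t σ ≥ (x - σ) / K`; with `sin δ ≥ 2δ/π` the determinant grows at least linearly to the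
right of `σ`, so `det (r σ, r' σ) > 0`. The same estimate for `p` itself shows `p' ≠ 0` wherever
`p` is differentiable, i.e. almost everywhere by Rademacher, which is what makes `s` strictly
increasing and `t` its genuine inverse.
-/

noncomputable section
open MeasureTheory Set Filter
open scoped ENNReal Topology

variable {X : Type*} [NormedAddCommGroup X] [NormedSpace ℝ X]

open Real

section General

variable {E : Type*} [NormedAddCommGroup E] [NormedSpace ℝ E]

theorem LipschitzWith.norm_derivWithin_Ici_le {f : ℝ → E} {K : NNReal} (hf : LipschitzWith K f)
    (x : ℝ) : ‖derivWithin f (Ici x) x‖ ≤ K := by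
  by_cases hd : DifferentiableWithinAt ℝ f (Ici x) x
  · have hslope := (hasDerivWithinAt_iff_tendsto_slope' (s := Ioi x) (lt_irrefl x)).1
      (hd.hasDerivWithinAt.Ioi_of_Ici)
    refine le_of_tendsto hslope.norm (eventually_nhdsWithin_of_forall fun y _ => ?_)
    rw [slope_def_module, norm_smul, norm_inv, ← dist_eq_norm, ← dist_eq_norm]
    exact inv_mul_le_of_le_mul₀ dist_nonneg K.coe_nonneg
      ((hf.dist_le_mul y x).trans_eq (mul_comm _ _))
  · rw [derivWithin_zero_of_not_differentiableWithinAt hd, norm_zero]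
    exact K.coe_nonneg

theorem LipschitzWith.intervalIntegrable_norm_derivWithin_Ici [CompleteSpace E] {f : ℝ → E}
    {K : NNReal} (hf : LipschitzWith K f) (a c : ℝ) :
    IntervalIntegrable (fun u => ‖derivWithin f (Ici u) u‖) volume a c :=
  IntervalIntegrable.mono_fun' (g := fun _ => (K : ℝ)) intervalIntegrable_const
    (aestronglyMeasurable_derivWithin_Ici f _).norm
    (ae_of_all _ fun u => by simpa using hf.norm_derivWithin_Ici_le u)

theorem Function.Antiperiodic.deriv {f : ℝ → E} {c : ℝ} (h : Function.Antiperiodic f c) :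
    Function.Antiperiodic (deriv f) c := by
  intro x
  rw [← deriv_comp_add_const, show (fun y => f (y + c)) = fun y => -f y from funext h,
    deriv.fun_neg]

theorem Function.Antiperiodic.rightDeriv {f : ℝ → E} {c : ℝ} (h : Function.Antiperiodic f c) :
    Function.Antiperiodic (rightDeriv f) c := by
  intro x
  have hshift :
      derivWithin (fun y => f (y + c)) (Ici x) x = derivWithin f (Ici (x + c)) (x + c) := by
    rw [derivWithin_comp_add_const, ← Set.image_vadd, funext fun y => vadd_eq_add c y,
      image_const_add_Ici, add_comm c]
  show derivWithin f (Ici (x + c)) (x + c) = -derivWithin f (Ici x) x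
  rw [← hshift, show (fun y => f (y + c)) = fun y => -f y from funext h,
    derivWithin.fun_neg]

theorem Function.Antiperiodic.hasDerivAt_of_add {f : ℝ → E} {c x : ℝ} {f' : E}
    (h : Function.Antiperiodic f c) (hf : HasDerivAt f f' (x + c)) : HasDerivAt f (-f') x := by
  have hshift := hf.comp_add_const x c
  rw [show (fun y => f (y + c)) = fun y => -f y from funext h] at hshift
  simpa using hshift.fun_neg

theorem HasDerivAt.le_of_eventually_le_slope {f : ℝ → ℝ} {f' x α : ℝ} (hf : HasDerivAt f f' x)
    (h : ∀ᶠ y in 𝓝[>] x, α ≤ slope f x y) : α ≤ f' :=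
  ge_of_tendsto
    ((hasDerivWithinAt_iff_tendsto_slope' (s := Ioi x) (lt_irrefl x)).1 hf.hasDerivWithinAt) h

theorem norm_inv_norm_smul_sub_le {a c : E} (ha : a ≠ 0) (hc : c ≠ 0) :
    ‖‖a‖⁻¹ • a - ‖c‖⁻¹ • c‖ ≤ 2 / ‖a‖ * ‖a - c‖ := by
  have hna : 0 < ‖a‖ := norm_pos_iff.2 ha
  have hnc : 0 < ‖c‖ := norm_pos_iff.2 hc
  have hsplit : ‖a‖⁻¹ • a - ‖c‖⁻¹ • c = ‖a‖⁻¹ • (a - c) + (‖a‖⁻¹ - ‖c‖⁻¹) • c := by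
    rw [smul_sub, sub_smul]; abel
  have hfirst : ‖‖a‖⁻¹ • (a - c)‖ = ‖a - c‖ / ‖a‖ := by
    rw [norm_smul, norm_inv, norm_norm, inv_mul_eq_div]
  have hsecond : ‖(‖a‖⁻¹ - ‖c‖⁻¹) • c‖ ≤ ‖a - c‖ / ‖a‖ := by
    have heq : ‖(‖a‖⁻¹ - ‖c‖⁻¹) • c‖ = |‖c‖ - ‖a‖| / ‖a‖ := by
      rw [norm_smul, Real.norm_eq_abs, inv_sub_inv hna.ne' hnc.ne', abs_div,
        abs_of_pos (mul_pos hna hnc)]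
      field_simp
    rw [heq, norm_sub_rev]
    gcongr
    exact abs_norm_sub_norm_le c a
  calc ‖‖a‖⁻¹ • a - ‖c‖⁻¹ • c‖ ≤ ‖a - c‖ / ‖a‖ + ‖a - c‖ / ‖a‖ := by
        rw [hsplit]; exact (norm_add_le _ _).trans (add_le_add hfirst.le hsecond)
    _ = 2 / ‖a‖ * ‖a - c‖ := by ring

end General

section Polar

variable (b : Module.Basis (Fin 2) ℝ X)

theorem expV_antiperiodic : Function.Antiperiodic (expV b) π := fun t => by
  simp only [expV, cos_add_pi, sin_add_pi, neg_smul, neg_add]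

@[simp]
theorem coord_zero_expV (t : ℝ) : b.coord 0 (expV b t) = cos t := by simp [expV]

@[simp]
theorem coord_one_expV (t : ℝ) : b.coord 1 (expV b t) = sin t := by simp [expV]

theorem expV_ne_zero (t : ℝ) : expV b t ≠ 0 := by
  intro h
  have h0 := coord_zero_expV b t
  have h1 := coord_one_expV b t
  rw [h, map_zero] at h0 h1
  nlinarith [sin_sq_add_cos_sq t]

theorem continuous_expV : Continuous (expV b) := by
  unfold expV; fun_prop

theorem norm_expV_le (t : ℝ) : ‖expV b t‖ ≤ ‖b 0‖ + ‖b 1‖ := by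
  refine (norm_add_le _ _).trans (add_le_add ?_ ?_) <;>
    refine (norm_smul_le _ _).trans (mul_le_of_le_one_left (norm_nonneg _) ?_)
  exacts [abs_cos_le_one t, abs_sin_le_one t]

theorem norm_expV_sub_expV_le (s t : ℝ) :
    ‖expV b s - expV b t‖ ≤ (‖b 0‖ + ‖b 1‖) * |s - t| := by
  have hsplit : expV b s - expV b t = (cos s - cos t) • b 0 + (sin s - sin t) • b 1 := by
    simp only [expV, sub_smul]; abel
  rw [hsplit]
  refine (norm_add_le _ _).trans ?_
  rw [norm_smul, norm_smul, Real.norm_eq_abs, Real.norm_eq_abs]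
  calc |cos s - cos t| * ‖b 0‖ + |sin s - sin t| * ‖b 1‖
      ≤ |s - t| * ‖b 0‖ + |s - t| * ‖b 1‖ :=
        add_le_add (mul_le_mul_of_nonneg_right (abs_cos_sub_cos_le s t) (norm_nonneg _))
          (mul_le_mul_of_nonneg_right (abs_sin_sub_sin_le s t) (norm_nonneg _))
    _ = (‖b 0‖ + ‖b 1‖) * |s - t| := by ring

theorem exists_pos_le_norm_expV : ∃ c > 0, ∀ t, c ≤ ‖expV b t‖ := by
  obtain ⟨t₀, -, hmin⟩ := isCompact_Icc.exists_isMinOn (nonempty_Icc.2 two_pi_pos.le)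
    (continuous_expV b).norm.continuousOn
  refine ⟨‖expV b t₀‖, norm_pos_iff.2 (expV_ne_zero b t₀), fun t => ?_⟩
  obtain ⟨y, hy, hyt⟩ := (expV_antiperiodic b).periodic_two_mul.exists_mem_Ico₀ two_pi_pos t
  rw [hyt]
  exact hmin (Ico_subset_Icc_self hy)

theorem polarParam_antiperiodic : Function.Antiperiodic (polarParam b) π := fun t => by
  rw [polarParam, polarParam, expV_antiperiodic b t, norm_neg, smul_neg]

theorem exists_lipschitzWith_polarParam :
    ∃ K : NNReal, 0 < K ∧ LipschitzWith K (polarParam b) := by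
  obtain ⟨c, hc, hle⟩ := exists_pos_le_norm_expV b
  have hM : 0 < ‖b 0‖ + ‖b 1‖ :=
    add_pos_of_pos_of_nonneg (norm_pos_iff.2 (b.ne_zero 0)) (norm_nonneg _)
  refine ⟨Real.toNNReal (2 / c * (‖b 0‖ + ‖b 1‖)), Real.toNNReal_pos.2 (by positivity),
    LipschitzWith.of_dist_le' fun s t => ?_⟩
  rw [dist_eq_norm, Real.dist_eq]
  calc ‖polarParam b s - polarParam b t‖ ≤ 2 / ‖expV b s‖ * ‖expV b s - expV b t‖ :=
        norm_inv_norm_smul_sub_le (expV_ne_zero b s) (expV_ne_zero b t)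
    _ ≤ 2 / c * ((‖b 0‖ + ‖b 1‖) * |s - t|) := by
        gcongr
        exacts [hle s, norm_expV_sub_expV_le b s t]
    _ = 2 / c * (‖b 0‖ + ‖b 1‖) * |s - t| := by ring

def wedge (v : X) : X →ₗ[ℝ] ℝ := b.coord 0 v • b.coord 1 - b.coord 1 v • b.coord 0

theorem wedge_apply (v w : X) :
    wedge b v w = b.coord 0 v * b.coord 1 w - b.coord 1 v * b.coord 0 w := rfl

theorem wedge_self (v : X) : wedge b v v = 0 := by
  rw [wedge_apply]; ring

theorem wedge_swap (v w : X) : wedge b w v = -wedge b v w := by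
  rw [wedge_apply, wedge_apply]; ring

theorem linearIndependent_of_wedge_ne_zero {v w : X} (h : wedge b v w ≠ 0) :
    LinearIndependent ℝ ![v, w] := by
  refine LinearIndependent.pair_iff.2 fun x y hxy => ?_
  have hv := congrArg (wedge b v) hxy
  have hw := congrArg (wedge b w) hxy
  simp only [map_add, map_smul, map_zero, smul_eq_mul] at hv hw
  rw [wedge_self] at hv hw
  rw [wedge_swap b v w] at hw
  exact ⟨by simpa [h] using hw, by simpa [h] using hv⟩

theorem wedge_polarParam (t u : ℝ) :
    wedge b (polarParam b t) (polarParam b u) = ‖expV b t‖⁻¹ * ‖expV b u‖⁻¹ * sin (u - t) := by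
  simp only [wedge_apply, polarParam, LinearMap.map_smul, smul_eq_mul, coord_zero_expV,
    coord_one_expV, sin_sub]
  ring

theorem wedge_polarParam_ge {t u : ℝ} (htu : t ≤ u) (hut : u ≤ t + π / 2) :
    2 / π * (‖b 0‖ + ‖b 1‖)⁻¹ ^ 2 * (u - t) ≤ wedge b (polarParam b t) (polarParam b u) := by
  have hsin : 2 / π * (u - t) ≤ sin (u - t) := mul_le_sin (by linarith) (by linarith)
  have hinv (x : ℝ) : (‖b 0‖ + ‖b 1‖)⁻¹ ≤ ‖expV b x‖⁻¹ :=
    inv_anti₀ (norm_pos_iff.2 (expV_ne_zero b x)) (norm_expV_le b x)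
  have hM : 0 ≤ (‖b 0‖ + ‖b 1‖)⁻¹ := by positivity
  rw [wedge_polarParam]
  calc 2 / π * (‖b 0‖ + ‖b 1‖)⁻¹ ^ 2 * (u - t)
      = (‖b 0‖ + ‖b 1‖)⁻¹ * (‖b 0‖ + ‖b 1‖)⁻¹ * (2 / π * (u - t)) := by ring
    _ ≤ ‖expV b t‖⁻¹ * ‖expV b u‖⁻¹ * sin (u - t) :=
        mul_le_mul (mul_le_mul (hinv t) (hinv u) hM (by positivity)) hsin
          (mul_nonneg (by positivity) (by linarith)) (by positivity)

theorem wedge_deriv_polarParam_comp_pos {φ : ℝ → ℝ} {s K : ℝ} (hK : 0 < K)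
    (hd : DifferentiableAt ℝ (polarParam b ∘ φ) s)
    (hφ : ∀ᶠ x in 𝓝[>] s, φ s ≤ φ x ∧ φ x ≤ φ s + π / 2 ∧ x - s ≤ K * (φ x - φ s)) :
    0 < wedge b (polarParam b (φ s)) (deriv (polarParam b ∘ φ) s) := by
  have := b.finiteDimensional_of_finite
  set γ := polarParam b ∘ φ
  have hΛ : HasDerivAt (fun x => wedge b (γ s) (γ x)) (wedge b (γ s) (deriv γ s)) s :=
    (LinearMap.toContinuousLinearMap (wedge b (γ s))).hasFDerivAt.comp_hasDerivAt s
      hd.hasDerivAt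
  set α := 2 / π * (‖b 0‖ + ‖b 1‖)⁻¹ ^ 2
  have hα : 0 < α := by
    have : 0 < ‖b 0‖ + ‖b 1‖ :=
      add_pos_of_pos_of_nonneg (norm_pos_iff.2 (b.ne_zero 0)) (norm_nonneg _)
    positivity
  refine (div_pos hα hK).trans_le (hΛ.le_of_eventually_le_slope ?_)
  filter_upwards [hφ, self_mem_nhdsWithin] with x ⟨hφ₁, hφ₂, hφK⟩ (hx : s < x)
  rw [slope_def_field, wedge_self, sub_zero, le_div_iff₀ (sub_pos.2 hx)]
  calc α / K * (x - s) ≤ α / K * (K * (φ x - φ s)) := by gcongr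
    _ = α * (φ x - φ s) := by field_simp
    _ ≤ wedge b (γ s) (γ x) := wedge_polarParam_ge b hφ₁ hφ₂

theorem deriv_polarParam_ne_zero {t : ℝ} (hd : DifferentiableAt ℝ (polarParam b) t) :
    deriv (polarParam b) t ≠ 0 := by
  have hφ : ∀ᶠ x in 𝓝[>] t, id t ≤ id x ∧ id x ≤ id t + π / 2 ∧ x - t ≤ 1 * (id x - id t) := by
    filter_upwards [Ioo_mem_nhdsGT (by linarith [pi_pos] : t < t + π / 2)] with x hx
    exact ⟨hx.1.le, hx.2.le, by simp⟩
  intro h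
  have hpos := wedge_deriv_polarParam_comp_pos b (φ := id) one_pos hd hφ
  rw [Function.comp_id, h, map_zero] at hpos
  exact hpos.false

end Polar

section ArcLength

variable (b : Module.Basis (Fin 2) ℝ X)

theorem intervalIntegrable_norm_rightDeriv_polarParam (a c : ℝ) :
    IntervalIntegrable (fun u => ‖rightDeriv (polarParam b) u‖) volume a c := by
  have := b.finiteDimensional_of_finite
  obtain ⟨K, -, hK⟩ := exists_lipschitzWith_polarParam b
  exact hK.intervalIntegrable_norm_derivWithin_Ici a c

theorem periodic_norm_rightDeriv_polarParam :
    Function.Periodic (fun u => ‖rightDeriv (polarParam b) u‖) π := fun u => by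
  simp only [(polarParam_antiperiodic b).rightDeriv u, norm_neg]

theorem arcLen_sub_arcLen (a c : ℝ) :
    arcLen b c - arcLen b a = ∫ u in a..c, ‖rightDeriv (polarParam b) u‖ :=
  intervalIntegral.integral_interval_sub_left
    (intervalIntegrable_norm_rightDeriv_polarParam b 0 c)
    (intervalIntegrable_norm_rightDeriv_polarParam b 0 a)

theorem exists_lipschitzWith_arcLen : ∃ K : NNReal, 0 < K ∧ LipschitzWith K (arcLen b) := by
  obtain ⟨K, hK, hlip⟩ := exists_lipschitzWith_polarParam b
  refine ⟨K, hK, LipschitzWith.of_dist_le_mul fun c a => ?_⟩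
  rw [Real.dist_eq, Real.dist_eq, arcLen_sub_arcLen, ← Real.norm_eq_abs]
  exact intervalIntegral.norm_integral_le_of_norm_le_const fun u _ => by
    rw [norm_norm]; exact hlip.norm_derivWithin_Ici_le u

theorem ae_pos_norm_rightDeriv_polarParam : ∀ᵐ u, 0 < ‖rightDeriv (polarParam b) u‖ := by
  have := b.finiteDimensional_of_finite
  obtain ⟨K, -, hK⟩ := exists_lipschitzWith_polarParam b
  filter_upwards [hK.ae_differentiableAt] with u hu
  rw [rightDeriv, hu.derivWithin (uniqueDiffWithinAt_Ici u), norm_pos_iff]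
  exact deriv_polarParam_ne_zero b hu

theorem arcLen_strictMono : StrictMono (arcLen b) := by
  intro a c hac
  rw [← sub_pos, arcLen_sub_arcLen, intervalIntegral.integral_pos_iff_support_of_nonneg_ae
    (ae_of_all _ fun _ => norm_nonneg _) (intervalIntegrable_norm_rightDeriv_polarParam b a c)]
  refine ⟨hac, ?_⟩
  rw [inter_comm, measure_inter_conull]
  · simpa using hac
  · exact measure_mono_null (fun u hu (hpos : 0 < _) => hpos.ne' (Function.notMem_support.1 hu))
      (ae_iff.1 (ae_pos_norm_rightDeriv_polarParam b))

theorem halfLen_pos : 0 < halfLen b := by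
  simpa [halfLen, arcLen] using arcLen_strictMono b pi_pos

theorem arcLen_add_pi (t : ℝ) : arcLen b (t + π) = arcLen b t + halfLen b := by
  rw [← sub_eq_iff_eq_add', arcLen_sub_arcLen,
    (periodic_norm_rightDeriv_polarParam b).intervalIntegral_add_eq t 0, zero_add]
  rfl

theorem arcLen_zsmul_pi (n : ℤ) : arcLen b (n • π) = n • halfLen b := by
  simpa [arcLen, halfLen] using
    (periodic_norm_rightDeriv_polarParam b).intervalIntegral_add_zsmul_eq n 0
      (intervalIntegrable_norm_rightDeriv_polarParam b)

theorem arcLen_surjective : Function.Surjective (arcLen b) := by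
  intro y
  obtain ⟨K, -, hK⟩ := exists_lipschitzWith_arcLen b
  obtain ⟨n, hn⟩ := exists_nat_ge (|y| / halfLen b)
  rw [div_le_iff₀ (halfLen_pos b)] at hn
  refine intermediate_value_univ ((-n : ℤ) • π) ((n : ℤ) • π) hK.continuous ?_
  rw [arcLen_zsmul_pi, arcLen_zsmul_pi, neg_smul, zsmul_eq_mul, Int.cast_natCast]
  exact abs_le.1 hn

theorem arcLen_arcInv (y : ℝ) : arcLen b (arcInv b y) = y :=
  Function.invFun_eq (arcLen_surjective b y)

theorem arcInv_add_halfLen (y : ℝ) : arcInv b (y + halfLen b) = arcInv b y + π :=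
  (arcLen_strictMono b).injective (by rw [arcLen_arcInv, arcLen_add_pi, arcLen_arcInv])

theorem natParam_antiperiodic : Function.Antiperiodic (natParam b) (halfLen b) := fun y => by
  simp only [natParam, Function.comp_apply, arcInv_add_halfLen, polarParam_antiperiodic b _]

theorem linearIndependent_natParam_deriv {s : ℝ} (hd : DifferentiableAt ℝ (natParam b) s) :
    LinearIndependent ℝ ![natParam b s, deriv (natParam b) s] := by
  obtain ⟨K, hK, hlip⟩ := exists_lipschitzWith_arcLen b
  refine linearIndependent_of_wedge_ne_zero b
    (wedge_deriv_polarParam_comp_pos b (NNReal.coe_pos.2 hK) hd ?_).ne'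
  set t₀ := arcInv b s
  have hs : s < arcLen b (t₀ + π / 2) := by
    simpa [t₀, arcLen_arcInv] using arcLen_strictMono b (lt_add_of_pos_right t₀ (by positivity))
  filter_upwards [Ioo_mem_nhdsGT hs] with x ⟨hsx, hxt⟩
  have hlt : t₀ < arcInv b x :=
    (arcLen_strictMono b).lt_iff_lt.1 (by rwa [arcLen_arcInv, arcLen_arcInv])
  have hgt : arcInv b x < t₀ + π / 2 :=
    (arcLen_strictMono b).lt_iff_lt.1 (by rwa [arcLen_arcInv])
  refine ⟨hlt.le, hgt.le, ?_⟩
  have := hlip.dist_le_mul (arcInv b x) t₀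
  rwa [Real.dist_eq, Real.dist_eq, arcLen_arcInv, arcLen_arcInv, abs_of_pos (sub_pos.2 hsx),
    abs_of_pos (sub_pos.2 hlt)] at this

end ArcLength

theorem curvatures_periodic_general (b : Module.Basis (Fin 2) ℝ X)
    (s : ℝ) (g₁ g₂ : X) (ρ₁ τ₁ ρ₂ τ₂ : ℝ)
    (hd1 : DifferentiableAt ℝ (natParam b) s)
    (h1 : HasDerivAt (deriv (natParam b)) g₁ s)
    (h2 : HasDerivAt (deriv (natParam b)) g₂ (s + halfLen b))
    (e1 : g₁ = (-ρ₁) • natParam b s + τ₁ • deriv (natParam b) s)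
    (e2 : g₂ = (-ρ₂) • natParam b (s + halfLen b) + τ₂ • deriv (natParam b) (s + halfLen b)) :
    ρ₂ = ρ₁ ∧ τ₂ = τ₁ := by
  have hr := natParam_antiperiodic b
  have hg : -g₂ = g₁ := (hr.deriv.hasDerivAt_of_add h2).unique h1
  rw [hr s, hr.deriv s] at e2
  have hcomb : (ρ₂ - ρ₁) • natParam b s + (τ₁ - τ₂) • deriv (natParam b) s = 0 := by
    linear_combination (norm := module) -hg - e1 - e2
  obtain ⟨hρ, hτ⟩ :=
    LinearIndependent.pair_iff.1 (linearIndependent_natParam_deriv b hd1) _ _ hcomb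
  exact ⟨sub_eq_zero.1 hρ, (sub_eq_zero.1 hτ).symm⟩

/-- The radial and tangential curvatures are `L`-periodic. -/
theorem curvatures_periodic [CompleteSpace X] (b : Module.Basis (Fin 2) ℝ X)
    (s : ℝ) (g₁ g₂ : X) (ρ₁ τ₁ ρ₂ τ₂ : ℝ)
    (hd1 : DifferentiableAt ℝ (natParam b) s)
    (hd2 : DifferentiableAt ℝ (natParam b) (s + halfLen b))
    (h1 : HasDerivAt (deriv (natParam b)) g₁ s)
    (h2 : HasDerivAt (deriv (natParam b)) g₂ (s + halfLen b))
    (e1 : g₁ = (-ρ₁) • natParam b s + τ₁ • deriv (natParam b) s)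
    (e2 : g₂ = (-ρ₂) • natParam b (s + halfLen b) + τ₂ • deriv (natParam b) (s + halfLen b)) :
    ρ₂ = ρ₁ ∧ τ₂ = τ₁ :=
  curvatures_periodic_general b s g₁ g₂ ρ₁ τ₁ ρ₂ τ₂ hd1 h1 h2 e1 e2

end
end
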